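/- arXiv:1412.0361 — 5 statements merged into one kernel-verified Lean document; each statement's English description precedes it below -/
import Mathlib

section
/- Let g be a nonzero nilpotent real Lie algebra with an integrable complex structure J. Then g^2(J) = [g,g] + J[g,g] is a proper subspace of g. -/
/-!
Write `V(p) = p + J p`. The Nijenhuis identity expresses `⁅J x, J y⁆` through brackets each of
which still has `x` or `y` as an entry, so `⁅V(I), V(I)⁆ ⊆ V(⁅g, I⁆)` for an ideal `I`. Hence if
`V(gʲ) = g` then `g¹ ⊆ V(gʲ⁺¹)`, and since `J² = -1` makes `V(gʲ⁺¹)` `J`-invariant, also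
`V(g¹) ⊆ V(gʲ⁺¹)`. So if `V(g¹) = g`, inductively every `V(gʲ)` is all of `g`, contradicting
`gᵏ = 0` for a nontrivial nilpotent `g`.
-/

namespace Submodule

variable {R M : Type*} [CommRing R] [AddCommGroup M] [Module R M]

theorem sup_map_le_sup_map_of_le {J : M →ₗ[R] M} (hJ2 : ∀ x, J (J x) = -x)
    {p q : Submodule R M} (h : p ≤ q ⊔ q.map J) : p ⊔ p.map J ≤ q ⊔ q.map J := by
  have hJJ : J ∘ₗ J = -LinearMap.id := LinearMap.ext hJ2
  have hmap : (q ⊔ q.map J).map J = q.map J ⊔ q := by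
    rw [map_sup, ← map_comp, hJJ, Submodule.map_neg, map_id]
  refine sup_le h ?_
  calc p.map J ≤ (q ⊔ q.map J).map J := map_mono h
    _ = q ⊔ q.map J := by rw [hmap, sup_comm]

end Submodule

namespace LieSubmodule

variable {R L : Type*} [CommRing R] [LieRing L] [LieAlgebra R L] {J : L →ₗ[R] L}

theorem lie_mem_sup_map_lie_top
    (hNij : ∀ x y : L, ⁅J x, J y⁆ = ⁅x, y⁆ + J ⁅J x, y⁆ + J ⁅x, J y⁆)
    (I : LieSubmodule R L L) {x y : L}
    (hx : x ∈ I.toSubmodule ⊔ I.toSubmodule.map J)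
    (hy : y ∈ I.toSubmodule ⊔ I.toSubmodule.map J) :
    ⁅x, y⁆ ∈ ⁅(⊤ : LieIdeal R L), I⁆.toSubmodule ⊔
      ⁅(⊤ : LieIdeal R L), I⁆.toSubmodule.map J := by
  set T := ⁅(⊤ : LieIdeal R L), I⁆.toSubmodule ⊔
    ⁅(⊤ : LieIdeal R L), I⁆.toSubmodule.map J
  have hlie_right : ∀ z m, m ∈ I → ⁅z, m⁆ ∈ T := fun z m hm =>
    Submodule.mem_sup_left (lie_mem_lie (mem_top z) hm)
  have hlie_left : ∀ m z, m ∈ I → ⁅m, z⁆ ∈ T := fun m z hm => by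
    rw [← lie_skew]; exact neg_mem (hlie_right z m hm)
  have hJlie : ∀ z m, m ∈ I → J ⁅z, m⁆ ∈ T := fun z m hm =>
    Submodule.mem_sup_right (Submodule.mem_map_of_mem (lie_mem_lie (mem_top z) hm))
  obtain ⟨a, ha, _, ⟨b, hb, rfl⟩, rfl⟩ := Submodule.mem_sup.1 hx
  obtain ⟨c, hc, _, ⟨d, hd, rfl⟩, rfl⟩ := Submodule.mem_sup.1 hy
  have hJbJd : ⁅J b, J d⁆ ∈ T := by
    rw [hNij, ← lie_skew b (J d), map_neg]
    exact add_mem (add_mem (hlie_left b d hb) (hJlie _ d hd)) (neg_mem (hJlie _ b hb))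
  rw [add_lie, lie_add, lie_add]
  exact add_mem (add_mem (hlie_left a c ha) (hlie_left a _ ha))
    (add_mem (hlie_right _ c hc) hJbJd)

theorem top_lie_top_le_sup_map_of_sup_map_eq_top
    (hNij : ∀ x y : L, ⁅J x, J y⁆ = ⁅x, y⁆ + J ⁅J x, y⁆ + J ⁅x, J y⁆)
    {I : LieSubmodule R L L} (hI : I.toSubmodule ⊔ I.toSubmodule.map J = ⊤) :
    ⁅(⊤ : LieIdeal R L), (⊤ : LieIdeal R L)⁆.toSubmodule ≤
      ⁅(⊤ : LieIdeal R L), I⁆.toSubmodule ⊔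
        ⁅(⊤ : LieIdeal R L), I⁆.toSubmodule.map J := by
  rw [lieIdeal_oper_eq_linear_span', Submodule.span_le]
  rintro _ ⟨x, -, y, -, rfl⟩
  exact lie_mem_sup_map_lie_top hNij I (hI ▸ Submodule.mem_top) (hI ▸ Submodule.mem_top)

end LieSubmodule

namespace LieModule

open LieSubmodule

variable {R L : Type*} [CommRing R] [LieRing L] [LieAlgebra R L] {J : L →ₗ[R] L}

theorem lowerCentralSeries_sup_map_eq_top (hJ2 : ∀ x, J (J x) = -x)
    (hNij : ∀ x y : L, ⁅J x, J y⁆ = ⁅x, y⁆ + J ⁅J x, y⁆ + J ⁅x, J y⁆)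
    (h1 : (lowerCentralSeries R L L 1).toSubmodule ⊔
      (lowerCentralSeries R L L 1).toSubmodule.map J = ⊤) (k : ℕ) :
    (lowerCentralSeries R L L k).toSubmodule ⊔
      (lowerCentralSeries R L L k).toSubmodule.map J = ⊤ := by
  induction k with
  | zero => simp
  | succ k ih =>
    refine top_le_iff.1 (h1 ▸ Submodule.sup_map_le_sup_map_of_le hJ2 ?_)
    simpa only [lowerCentralSeries_succ, lowerCentralSeries_zero] using
      top_lie_top_le_sup_map_of_sup_map_eq_top hNij ih

end LieModule

/-- (Salamon) If `g` is a nonzero nilpotent real Lie algebra with an integrable complex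
structure `J`, then `g²(J) = [g,g] + J[g,g]` is a proper subspace of `g`. -/
theorem gJ2_proper
    {g : Type*} [LieRing g] [LieAlgebra ℝ g] [Nontrivial g]
    [LieModule.IsNilpotent g g] (J : g →ₗ[ℝ] g)
    (hJ2 : ∀ X : g, J (J X) = -X)
    (hNij : ∀ X Y : g, ⁅J X, J Y⁆ = ⁅X, Y⁆ + J ⁅J X, Y⁆ + J ⁅X, J Y⁆) :
    (LieModule.lowerCentralSeries ℝ g g 1).toSubmodule ⊔
      Submodule.map J (LieModule.lowerCentralSeries ℝ g g 1).toSubmodule ≠ ⊤ := by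
  intro h1
  obtain ⟨k, hk⟩ := LieModule.IsNilpotent.nilpotent ℝ g g
  have := LieModule.lowerCentralSeries_sup_map_eq_top hJ2 hNij h1 k
  rw [hk, LieSubmodule.bot_toSubmodule, Submodule.map_bot, sup_idem] at this
  exact bot_ne_top this
end

section
/- No filiform Lie algebra of dimension ≥ 6 admits an integrable complex structure. (A filiform Lie algebra is a nilpotent Lie algebra g with nil-index s(g) = dim g - 1.) -/
/-!
Write `C^k` for the lower central series and `W_k = C^k ∩ J⁻¹ C^k` for the largest `J`-invariant
subspace of `C^k`. In a filiform algebra of dimension `n`, `dim C^k = n - 1 - k` for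
`1 ≤ k ≤ n - 2`. Hence `W_1 ≠ 0` because `2 (n - 2) > n`, while `W_{n-2} = 0` because `J` has no
invariant line. At the last `K` with `W_K ≠ 0` pick `y ∈ W_K \ C^{K+1}`. The Nijenhuis condition
puts `⁅x, y⁆ - ⁅J x, J y⁆` in `W_{K+1} = 0`, so `⁅J x, y⁆ = -⁅x, J y⁆`; writing
`J y ≡ c y mod C^{K+1}` this gives `(1 + c²) ⁅x, y⁆ ∈ C^{K+2}` for every `x`. As `y` spans `C^K`
modulo `C^{K+1}`, it follows that `C^{K+1} = C^{K+2}`, contradicting nilpotency.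
-/

open Module LieModule

theorem Submodule.sup_span_singleton_eq_of_finrank_eq {K V : Type*} [DivisionRing K]
    [AddCommGroup V] [Module K V] [FiniteDimensional K V] {p q : Submodule K V} {v : V}
    (hpq : p ≤ q) (hvq : v ∈ q) (hvp : v ∉ p) (h : finrank K q = finrank K p + 1) :
    p ⊔ K ∙ v = q :=
  eq_of_le_of_finrank_eq (sup_le hpq ((span_singleton_le_iff_mem v q).mpr hvq))
    (by rw [finrank_sup_span_singleton hvp, h])

namespace LieModule

section CommRing

variable {R L M : Type*} [CommRing R] [LieRing L] [LieAlgebra R L] [AddCommGroup M] [Module R M]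
  [LieRingModule L M]

lemma lie_mem_lowerCentralSeries_succ (x : L) {m : M} {k : ℕ}
    (hm : m ∈ lowerCentralSeries R L M k) : ⁅x, m⁆ ∈ lowerCentralSeries R L M (k + 1) := by
  rw [lowerCentralSeries_succ]
  exact LieSubmodule.lie_mem_lie (LieSubmodule.mem_top x) hm

lemma lowerCentralSeries_eq_bot_of_le_succ [LieModule R L M] [IsNilpotent L M] {k : ℕ}
    (h : lowerCentralSeries R L M k ≤ lowerCentralSeries R L M (k + 1)) :
    lowerCentralSeries R L M k = ⊥ := by
  have hsucc := le_antisymm (antitone_lowerCentralSeries R L M k.le_succ) h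
  have hstable : ∀ j, lowerCentralSeries R L M (k + j) = lowerCentralSeries R L M k := by
    intro j
    induction j with
    | zero => rfl
    | succ j ih => rw [← add_assoc, lowerCentralSeries_succ, ih, ← lowerCentralSeries_succ, hsucc]
  obtain ⟨N, hN⟩ := IsNilpotent.nilpotent R L M
  rw [← hstable N, eq_bot_iff, ← hN]
  exact antitone_lowerCentralSeries R L M (Nat.le_add_left N k)

lemma lowerCentralSeries_succ_lt [LieModule R L M] [IsNilpotent L M] {k : ℕ}
    (h : lowerCentralSeries R L M k ≠ ⊥) :
    lowerCentralSeries R L M (k + 1) < lowerCentralSeries R L M k :=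
  lt_of_le_not_ge (antitone_lowerCentralSeries R L M k.le_succ)
    fun h' ↦ h (lowerCentralSeries_eq_bot_of_le_succ h')

lemma lowerCentralSeries_succ_le_of_le_sup_span [LieModule R L M] {k : ℕ} {m : M}
    (h : (lowerCentralSeries R L M k).toSubmodule ≤
      (lowerCentralSeries R L M (k + 1)).toSubmodule ⊔ R ∙ m)
    (hm : ∀ x : L, ⁅x, m⁆ ∈ lowerCentralSeries R L M (k + 2)) :
    lowerCentralSeries R L M (k + 1) ≤ lowerCentralSeries R L M (k + 2) := by
  rw [lowerCentralSeries_succ R L M k, LieSubmodule.lie_le_iff]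
  intro x _ m' hm'
  obtain ⟨w, hw, _, hv, rfl⟩ := Submodule.mem_sup.mp (h hm')
  obtain ⟨c, rfl⟩ := Submodule.mem_span_singleton.mp hv
  rw [lie_add, lie_smul]
  exact add_mem (lie_mem_lowerCentralSeries_succ x hw) (SMulMemClass.smul_mem c (hm x))

end CommRing

section Field

variable {K L M : Type*} [Field K] [LieRing L] [LieAlgebra K L] [AddCommGroup M] [Module K M]
  [LieRingModule L M] [LieModule K L M]

lemma finrank_lowerCentralSeries_add_le [IsNilpotent L M] [FiniteDimensional K M] {i j : ℕ}
    (hij : i ≤ j) (hj : lowerCentralSeries K L M j ≠ ⊥) :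
    finrank K (lowerCentralSeries K L M j).toSubmodule + (j - i) ≤
      finrank K (lowerCentralSeries K L M i).toSubmodule := by
  induction j, hij using Nat.le_induction with
  | base => simp
  | succ j hij ih =>
    have hj' := ne_bot_of_le_ne_bot hj (antitone_lowerCentralSeries K L M j.le_succ)
    have hlt := Submodule.finrank_lt_finrank_of_lt (lowerCentralSeries_succ_lt hj')
    have := ih hj'
    omega

lemma finrank_lowerCentralSeries_one_add_two_le [IsNilpotent L L] [FiniteDimensional K L]
    (h : lowerCentralSeries K L L 1 ≠ ⊥) :
    finrank K (lowerCentralSeries K L L 1).toSubmodule + 2 ≤ finrank K L := by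
  by_contra! hlt
  have hlt_top : lowerCentralSeries K L L 1 < lowerCentralSeries K L L 0 :=
    lowerCentralSeries_succ_lt
      (ne_bot_of_le_ne_bot h (antitone_lowerCentralSeries K L L zero_le_one))
  obtain ⟨x, -, hx⟩ := SetLike.exists_of_lt hlt_top
  have htop : (lowerCentralSeries K L L 0).toSubmodule ≤
      (lowerCentralSeries K L L 1).toSubmodule ⊔ K ∙ x := by
    rw [lowerCentralSeries_zero, LieSubmodule.top_toSubmodule, top_le_iff]
    refine Submodule.eq_top_of_finrank_eq (le_antisymm (Submodule.finrank_le _) ?_)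
    rw [Submodule.finrank_sup_span_singleton hx]
    omega
  refine h (lowerCentralSeries_eq_bot_of_le_succ
    (lowerCentralSeries_succ_le_of_le_sup_span htop fun y ↦ ?_))
  obtain ⟨w, hw, _, hv, rfl⟩ := Submodule.mem_sup.mp (htop (Submodule.mem_top (x := y)))
  obtain ⟨c, rfl⟩ := Submodule.mem_span_singleton.mp hv
  rw [add_lie, smul_lie, lie_self, smul_zero, add_zero, ← lie_skew]
  exact neg_mem (lie_mem_lowerCentralSeries_succ x hw)

lemma finrank_lowerCentralSeries_of_filiform [IsNilpotent L L] [FiniteDimensional K L]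
    (hfil : lowerCentralSeries K L L (finrank K L - 2) ≠ ⊥) {k : ℕ} (hk1 : 1 ≤ k)
    (hk : k ≤ finrank K L - 2) :
    finrank K (lowerCentralSeries K L L k).toSubmodule + k + 1 = finrank K L := by
  have hne : ∀ i ≤ finrank K L - 2, lowerCentralSeries K L L i ≠ ⊥ := fun i hi ↦
    ne_bot_of_le_ne_bot hfil (antitone_lowerCentralSeries K L L hi)
  have hupper := finrank_lowerCentralSeries_add_le hk1 (hne k hk)
  have hlower := finrank_lowerCentralSeries_add_le hk hfil
  have hcodim := finrank_lowerCentralSeries_one_add_two_le (hne 1 (hk1.trans hk))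
  have hpos : 0 < finrank K (lowerCentralSeries K L L (finrank K L - 2)).toSubmodule :=
    Nat.pos_of_ne_zero fun h0 ↦
      hfil ((LieSubmodule.toSubmodule_eq_bot _).mp (Submodule.finrank_eq_zero.mp h0))
  omega

end Field

end LieModule

section ComplexStructure

variable {V : Type*} [AddCommGroup V] [Module ℝ V] {J : V →ₗ[ℝ] V}

/-- When `J ^ 2 = -1`, the largest `J`-invariant subspace of `p`. -/
def invariantCore (J : V →ₗ[ℝ] V) (p : Submodule ℝ V) : Submodule ℝ V :=
  p ⊓ p.comap J

lemma mem_invariantCore {p : Submodule ℝ V} {v : V} :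
    v ∈ invariantCore J p ↔ v ∈ p ∧ J v ∈ p :=
  Iff.rfl

lemma invariantCore_mono : Monotone (invariantCore J) :=
  fun _ _ h ↦ inf_le_inf h (Submodule.comap_mono h)

lemma eq_zero_of_apply_eq_smul (hJ : ∀ v, J (J v) = -v) {v : V} {c : ℝ} (hv : J v = c • v) :
    v = 0 := by
  have h : (c * c + 1) • v = 0 := by
    rw [add_smul, one_smul, ← smul_smul, ← hv, ← map_smul, ← hv, hJ, neg_add_cancel]
  exact (smul_eq_zero.mp h).resolve_left
    (add_pos_of_nonneg_of_pos (mul_self_nonneg c) one_pos).ne'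

lemma invariantCore_eq_bot_of_finrank_eq_one (hJ : ∀ v, J (J v) = -v) {p : Submodule ℝ V}
    (hp : finrank ℝ p = 1) : invariantCore J p = ⊥ := by
  have : FiniteDimensional ℝ p := Module.finite_of_finrank_pos (by omega)
  refine (Submodule.eq_bot_iff _).mpr fun v ⟨hv, hJv⟩ ↦ by_contra fun hv0 ↦ hv0 ?_
  have hspan : ℝ ∙ v = p := Submodule.eq_of_le_of_finrank_eq
    ((Submodule.span_singleton_le_iff_mem v p).mpr hv) (by rw [finrank_span_singleton hv0, hp])
  obtain ⟨c, hc⟩ := Submodule.mem_span_singleton.mp (hspan ▸ hJv)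
  exact eq_zero_of_apply_eq_smul hJ hc.symm

lemma invariantCore_ne_bot [FiniteDimensional ℝ V] (hJ : ∀ v, J (J v) = -v)
    {p : Submodule ℝ V} (hp : finrank ℝ V < 2 * finrank ℝ p) : invariantCore J p ≠ ⊥ := by
  let e : V ≃ₗ[ℝ] V := LinearEquiv.ofInjectiveEndo J fun x y hxy ↦ by
    simpa [hJ] using congrArg J hxy
  have hcomap : finrank ℝ (p.comap J) = finrank ℝ p := by
    change finrank ℝ (p.comap (e : V →ₗ[ℝ] V)) = _
    rw [Submodule.comap_equiv_eq_map_symm, LinearEquiv.finrank_map_eq]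
  have hsum := Submodule.finrank_sup_add_finrank_inf_eq p (p.comap J)
  have hsup := Submodule.finrank_le (p ⊔ p.comap J)
  intro hbot
  rw [invariantCore] at hbot
  rw [hbot, finrank_bot] at hsum
  omega

lemma exists_mem_invariantCore_notMem (hJ : ∀ v, J (J v) = -v) {p q : Submodule ℝ V}
    (hp : invariantCore J p ≠ ⊥) (hq : invariantCore J q = ⊥) :
    ∃ y ∈ invariantCore J p, y ∉ q := by
  obtain ⟨y, hy, hy0⟩ := Submodule.exists_mem_ne_zero_of_ne_bot hp
  by_cases hyq : y ∈ q
  · refine ⟨J y, ⟨hy.2, show J (J y) ∈ p by rw [hJ]; exact neg_mem hy.1⟩, fun hJy ↦ hy0 ?_⟩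
    rw [← Submodule.mem_bot ℝ, ← hq]
    exact ⟨hyq, hJy⟩
  · exact ⟨y, hy, hyq⟩

end ComplexStructure

section Nijenhuis

variable {L : Type*} [LieRing L] [LieAlgebra ℝ L] {J : L →ₗ[ℝ] L}

lemma lie_sub_lie_mem_invariantCore (hJ : ∀ X, J (J X) = -X)
    (hN : ∀ X Y, ⁅J X, J Y⁆ = ⁅X, Y⁆ + J ⁅J X, Y⁆ + J ⁅X, J Y⁆) {k : ℕ} {y : L}
    (hy : y ∈ invariantCore J (lowerCentralSeries ℝ L L k).toSubmodule) (x : L) :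
    ⁅x, y⁆ - ⁅J x, J y⁆ ∈ invariantCore J (lowerCentralSeries ℝ L L (k + 1)).toSubmodule := by
  have hJq : J (⁅x, y⁆ - ⁅J x, J y⁆) = ⁅J x, y⁆ + ⁅x, J y⁆ := by
    rw [hN, map_sub, map_add, map_add, hJ, hJ]
    abel
  refine mem_invariantCore.mpr ⟨sub_mem (lie_mem_lowerCentralSeries_succ x hy.1)
    (lie_mem_lowerCentralSeries_succ (J x) hy.2), ?_⟩
  rw [hJq]
  exact add_mem (lie_mem_lowerCentralSeries_succ (J x) hy.1)
    (lie_mem_lowerCentralSeries_succ x hy.2)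

lemma lie_apply_eq_neg_lie_apply (hJ : ∀ X, J (J X) = -X)
    (hN : ∀ X Y, ⁅J X, J Y⁆ = ⁅X, Y⁆ + J ⁅J X, Y⁆ + J ⁅X, J Y⁆) {k : ℕ} {y : L}
    (hy : y ∈ invariantCore J (lowerCentralSeries ℝ L L k).toSubmodule)
    (hcore : invariantCore J (lowerCentralSeries ℝ L L (k + 1)).toSubmodule = ⊥) (x : L) :
    ⁅J x, y⁆ = -⁅x, J y⁆ := by
  have hq : ⁅J x, J y⁆ = ⁅x, y⁆ := by
    have := lie_sub_lie_mem_invariantCore hJ hN hy x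
    rw [hcore, Submodule.mem_bot] at this
    exact (sub_eq_zero.mp this).symm
  have hJp : J (⁅J x, y⁆ + ⁅x, J y⁆) = 0 := by
    have := hN x y
    rwa [hq, add_assoc, left_eq_add, ← map_add] at this
  have hp := congrArg J hJp
  rw [hJ, map_zero, neg_eq_zero] at hp
  exact eq_neg_of_add_eq_zero_left hp

lemma lie_mem_lowerCentralSeries_add_two (hJ : ∀ X, J (J X) = -X) {k : ℕ} {y : L} {c : ℝ}
    (hrel : ∀ x, ⁅J x, y⁆ = -⁅x, J y⁆) (hc : J y - c • y ∈ lowerCentralSeries ℝ L L (k + 1))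
    (x : L) : ⁅x, y⁆ ∈ lowerCentralSeries ℝ L L (k + 2) := by
  have key : ∀ x, ⁅J x, y⁆ + c • ⁅x, y⁆ ∈ lowerCentralSeries ℝ L L (k + 2) := fun x ↦ by
    have : ⁅J x, y⁆ + c • ⁅x, y⁆ = -⁅x, J y - c • y⁆ := by
      rw [hrel, lie_sub, lie_smul]
      abel
    rw [this]
    exact neg_mem (lie_mem_lowerCentralSeries_succ x hc)
  have h := sub_mem (key (J x)) (SMulMemClass.smul_mem c (key x))
  have hcomb : ⁅J (J x), y⁆ + c • ⁅J x, y⁆ - c • (⁅J x, y⁆ + c • ⁅x, y⁆) =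
      -(c * c + 1) • ⁅x, y⁆ := by
    rw [hJ, neg_lie]
    module
  rw [hcomb] at h
  exact (Submodule.smul_mem_iff (lowerCentralSeries ℝ L L (k + 2)).toSubmodule
    (neg_ne_zero.mpr (add_pos_of_nonneg_of_pos (mul_self_nonneg c) one_pos).ne')).mp h

end Nijenhuis

/-- No filiform Lie algebra of dimension `≥ 6` admits an integrable complex structure.
Filiform means nilpotent with nil-index `s(g) = dim g - 1`, i.e.
`g^{dim g - 1} = LieModule.lowerCentralSeries ℝ g g (dim g - 2) ≠ ⊥`. -/
theorem filiform_no_complex_structure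
    {g : Type*} [LieRing g] [LieAlgebra ℝ g] [FiniteDimensional ℝ g]
    [LieModule.IsNilpotent g g]
    (hdim : 6 ≤ Module.finrank ℝ g)
    (hfil : LieModule.lowerCentralSeries ℝ g g (Module.finrank ℝ g - 2) ≠ ⊥) :
    ¬∃ J : g →ₗ[ℝ] g,
      (∀ X : g, J (J X) = -X) ∧
      (∀ X Y : g, ⁅J X, J Y⁆ = ⁅X, Y⁆ + J ⁅J X, Y⁆ + J ⁅X, J Y⁆) := by
  rintro ⟨J, hJ, hN⟩
  set n := finrank ℝ g
  set C : ℕ → Submodule ℝ g := fun k ↦ (lowerCentralSeries ℝ g g k).toSubmodule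
  have hdimC {k : ℕ} (hk1 : 1 ≤ k) (hk : k ≤ n - 2) : finrank ℝ (C k) + k + 1 = n :=
    finrank_lowerCentralSeries_of_filiform hfil hk1 hk
  have hcore_top : invariantCore J (C (n - 2)) = ⊥ :=
    invariantCore_eq_bot_of_finrank_eq_one hJ (by have := hdimC (by omega) le_rfl; omega)
  have hcore_one : invariantCore J (C 1) ≠ ⊥ :=
    invariantCore_ne_bot hJ (by have := hdimC le_rfl (by omega); omega)
  obtain ⟨K', hcoreK, hcoreK1⟩ := Nat.exists_not_and_succ_of_not_zero_of_exists
    (p := fun j ↦ invariantCore J (C (j + 1)) = ⊥) hcore_one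
    ⟨n - 3, by rwa [show n - 3 + 1 = n - 2 by omega]⟩
  set K := K' + 1
  have hKn : K + 1 ≤ n - 2 := by
    by_contra!
    exact hcoreK (eq_bot_iff.mpr (hcore_top ▸ invariantCore_mono
      (antitone_lowerCentralSeries ℝ g g (show n - 2 ≤ K by omega))))
  obtain ⟨y, hy, hyK1⟩ := exists_mem_invariantCore_notMem hJ hcoreK hcoreK1
  have hstep : finrank ℝ (C K) = finrank ℝ (C (K + 1)) + 1 := by
    have := hdimC (k := K) (by omega) (by omega)
    have := hdimC (k := K + 1) (by omega) hKn
    omega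
  have hsplit : C (K + 1) ⊔ ℝ ∙ y = C K := Submodule.sup_span_singleton_eq_of_finrank_eq
    (antitone_lowerCentralSeries ℝ g g K.le_succ) hy.1 hyK1 hstep
  obtain ⟨w, hw, _, hv, hJy⟩ := Submodule.mem_sup.mp (hsplit ▸ hy.2)
  obtain ⟨c, rfl⟩ := Submodule.mem_span_singleton.mp hv
  have hbr := lie_mem_lowerCentralSeries_add_two hJ (lie_apply_eq_neg_lie_apply hJ hN hy hcoreK1)
    (c := c) (by rw [← hJy, add_sub_cancel_right]; exact hw)
  exact ne_bot_of_le_ne_bot hfil (antitone_lowerCentralSeries ℝ g g hKn)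
    (lowerCentralSeries_eq_bot_of_le_succ
      (lowerCentralSeries_succ_le_of_le_sup_span hsplit.ge hbr))
end

section
/- For each n ≥ 2, the 2n-dimensional real Lie algebra B(n) with basis x₁,y₁,...,xₙ,yₙ and nonzero brackets [x₁,y₁] = y₂, [x₁,x_l] = [y₁,y_l] = x_{l+1}, [x₁,y_l] = [x_l,y₁] = y_{l+1} for 2 ≤ l ≤ n-1 is an n-step nilpotent Lie algebra, and the linear map J defined by Jx_l = -y_l, Jy_l = x_l is an abelian complex structure on B(n) (i.e., J² = -id and [JX,JY] = [X,Y] for all X,Y). -/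
/-- For `n ≥ 2`, let `B(n)` be a `2n`-dimensional real Lie algebra with basis
`x₁, y₁, …, xₙ, yₙ` and nonzero brackets `[x₁,y₁] = y₂`, `[x₁,x_l] = [y₁,y_l] = x_{l+1}`,
`[x₁,y_l] = [x_l,y₁] = y_{l+1}` for `2 ≤ l ≤ n - 1` (all other basis brackets zero).
Then `B(n)` is `n`-step nilpotent and the linear map `J` with `J x_l = -y_l`,
`J y_l = x_l` is an abelian complex structure on it. -/
theorem B_n_abelian_complex_structure
    {g : Type*} [LieRing g] [LieAlgebra ℝ g] (n : ℕ) (hn : 2 ≤ n)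
    (x y : ℕ → g)
    (hli : LinearIndependent ℝ
      (fun p : Fin n × Bool => if p.2 then y (p.1.val + 1) else x (p.1.val + 1)))
    (hspan : Submodule.span ℝ
      (Set.range (fun p : Fin n × Bool =>
        if p.2 then y (p.1.val + 1) else x (p.1.val + 1))) = ⊤)
    (h1 : ⁅x 1, y 1⁆ = y 2)
    (h2 : ∀ l : ℕ, 2 ≤ l → l ≤ n - 1 →
      ⁅x 1, x l⁆ = x (l + 1) ∧ ⁅y 1, y l⁆ = x (l + 1) ∧
      ⁅x 1, y l⁆ = y (l + 1) ∧ ⁅x l, y 1⁆ = y (l + 1))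
    (h3 : ⁅x 1, x n⁆ = 0 ∧ ⁅y 1, y n⁆ = 0 ∧ ⁅x 1, y n⁆ = 0 ∧ ⁅x n, y 1⁆ = 0)
    (h4 : ∀ i j : ℕ, 2 ≤ i → i ≤ n → 2 ≤ j → j ≤ n →
      ⁅x i, x j⁆ = 0 ∧ ⁅x i, y j⁆ = 0 ∧ ⁅y i, y j⁆ = 0)
    (J : g →ₗ[ℝ] g)
    (hJ : ∀ l : ℕ, 1 ≤ l → l ≤ n → J (x l) = -y l ∧ J (y l) = x l) :
    (∀ X : g, J (J X) = -X) ∧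
    (∀ X Y : g, ⁅J X, J Y⁆ = ⁅X, Y⁆) ∧
    LieModule.lowerCentralSeries ℝ g g (n - 1) ≠ ⊥ ∧
    LieModule.lowerCentralSeries ℝ g g n = ⊥ := by
  have hJx : ∀ l : ℕ, 1 ≤ l → l ≤ n → J (x l) = -y l := fun l a b => (hJ l a b).1
  have hJy : ∀ l : ℕ, 1 ≤ l → l ≤ n → J (y l) = x l := fun l a b => (hJ l a b).2
  -- generic induction principle from the spanning hypothesis
  have hind : ∀ (P : g → Prop), (∀ l, 1 ≤ l → l ≤ n → P (x l)) →
      (∀ l, 1 ≤ l → l ≤ n → P (y l)) → P 0 →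
      (∀ a b : g, P a → P b → P (a + b)) →
      (∀ (r : ℝ) (a : g), P a → P (r • a)) → ∀ X : g, P X := by
    intro P hx hy h0 hadd hsmul X
    have hX : X ∈ Submodule.span ℝ (Set.range (fun p : Fin n × Bool =>
        if p.2 then y (p.1.val + 1) else x (p.1.val + 1))) := by
      rw [hspan]; trivial
    refine Submodule.span_induction (p := fun z _ => P z) ?_ h0
      (fun a b _ _ => hadd a b) (fun r a _ => hsmul r a) hX
    rintro z ⟨⟨i, b⟩, rfl⟩
    cases b
    · simpa using hx (i.val + 1) (by omega) (by omega)
    · simpa using hy (i.val + 1) (by omega) (by omega)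
  -- Part 1 : J ∘ J = -id
  have part1 : ∀ X : g, J (J X) = -X := by
    refine hind (fun X => J (J X) = -X) ?_ ?_ ?_ ?_ ?_
    · intro l hl1 hln
      rw [hJx l hl1 hln, map_neg, hJy l hl1 hln]
    · intro l hl1 hln
      rw [hJy l hl1 hln, hJx l hl1 hln]
    · simp
    · intro a b ha hb; rw [map_add, map_add, ha, hb, neg_add]
    · intro r a ha; rw [map_smul, map_smul, ha, smul_neg]
  -- key bracket symmetries
  have key1 : ∀ i j : ℕ, 1 ≤ i → i ≤ n → 1 ≤ j → j ≤ n → ⁅y i, y j⁆ = ⁅x i, x j⁆ := by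
    have aux : ∀ j, 2 ≤ j → j ≤ n → ⁅y 1, y j⁆ = ⁅x 1, x j⁆ := by
      intro j hj2 hjn
      rcases eq_or_lt_of_le hjn with rfl | hlt
      · rw [h3.2.1, h3.1]
      · have hj' : j ≤ n - 1 := by omega
        rw [(h2 j hj2 hj').2.1, (h2 j hj2 hj').1]
    intro i j hi1 hin hj1 hjn
    rcases Nat.lt_or_ge i 2 with hi | hi
    · have hi' : i = 1 := by omega
      subst hi'
      rcases Nat.lt_or_ge j 2 with hj | hj
      · have hj' : j = 1 := by omega
        subst hj'; rw [lie_self, lie_self]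
      · exact aux j hj hjn
    · rcases Nat.lt_or_ge j 2 with hj | hj
      · have hj' : j = 1 := by omega
        subst hj'
        rw [← lie_skew (x i) (x 1), ← lie_skew (y i) (y 1), aux i hi hin]
      · rw [(h4 i j hi hin hj hjn).2.2, (h4 i j hi hin hj hjn).1]
  have key2 : ∀ i j : ℕ, 1 ≤ i → i ≤ n → 1 ≤ j → j ≤ n → ⁅x j, y i⁆ = ⁅x i, y j⁆ := by
    have aux : ∀ j, 2 ≤ j → j ≤ n → ⁅x j, y 1⁆ = ⁅x 1, y j⁆ := by
      intro j hj2 hjn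
      rcases eq_or_lt_of_le hjn with rfl | hlt
      · rw [h3.2.2.2, h3.2.2.1]
      · have hj' : j ≤ n - 1 := by omega
        rw [(h2 j hj2 hj').2.2.2, (h2 j hj2 hj').2.2.1]
    intro i j hi1 hin hj1 hjn
    rcases Nat.lt_or_ge i 2 with hi | hi
    · have hi' : i = 1 := by omega
      subst hi'
      rcases Nat.lt_or_ge j 2 with hj | hj
      · have hj' : j = 1 := by omega
        subst hj'
        rfl
      · exact aux j hj hjn
    · rcases Nat.lt_or_ge j 2 with hj | hj
      · have hj' : j = 1 := by omega
        subst hj'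
        exact (aux i hi hin).symm
      · rw [(h4 j i hj hjn hi hin).2.1, (h4 i j hi hin hj hjn).2.1]
  -- Part 2 : abelian complex structure
  have part2 : ∀ X Y : g, ⁅J X, J Y⁆ = ⁅X, Y⁆ := by
    have inner : ∀ c : g, (∀ i, 1 ≤ i → i ≤ n → ⁅J (x i), J c⁆ = ⁅x i, c⁆) →
        (∀ i, 1 ≤ i → i ≤ n → ⁅J (y i), J c⁆ = ⁅y i, c⁆) →
        ∀ X : g, ⁅J X, J c⁆ = ⁅X, c⁆ := by
      intro c hcx hcy
      refine hind (fun X => ⁅J X, J c⁆ = ⁅X, c⁆) hcx hcy ?_ ?_ ?_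
      · simp
      · intro a b ha hb; rw [map_add, add_lie, add_lie, ha, hb]
      · intro r a ha; rw [map_smul, smul_lie, smul_lie, ha]
    intro X Y
    refine hind (fun Y => ∀ X : g, ⁅J X, J Y⁆ = ⁅X, Y⁆) ?_ ?_ ?_ ?_ ?_ Y X
    · intro l hl1 hln
      refine inner (x l) ?_ ?_
      · intro i hi1 hin
        rw [hJx i hi1 hin, hJx l hl1 hln, neg_lie, lie_neg, neg_neg,
          key1 i l hi1 hin hl1 hln]
      · intro i hi1 hin
        rw [hJy i hi1 hin, hJx l hl1 hln, lie_neg, ← lie_skew (y i) (x l),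
          key2 l i hl1 hln hi1 hin]
    · intro l hl1 hln
      refine inner (y l) ?_ ?_
      · intro i hi1 hin
        rw [hJx i hi1 hin, hJy l hl1 hln, neg_lie, lie_skew (x l) (y i),
          key2 i l hi1 hin hl1 hln]
      · intro i hi1 hin
        rw [hJy i hi1 hin, hJy l hl1 hln, key1 i l hi1 hin hl1 hln]
    · intro X; simp
    · intro a b ha hb X; rw [map_add, lie_add, lie_add, ha X, hb X]
    · intro r a ha X; rw [map_smul, lie_smul, lie_smul, ha X]
  -- the filtration submodules
  let S : ℕ → Submodule ℝ g := fun k =>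
    Submodule.span ℝ {z : g | ∃ l, k + 1 ≤ l ∧ l ≤ n ∧ (z = x l ∨ z = y l)}
  have hSx : ∀ k l, k + 1 ≤ l → l ≤ n → x l ∈ S k := fun k l a b =>
    Submodule.subset_span ⟨l, a, b, Or.inl rfl⟩
  have hSy : ∀ k l, k + 1 ≤ l → l ≤ n → y l ∈ S k := fun k l a b =>
    Submodule.subset_span ⟨l, a, b, Or.inr rfl⟩
  have hSmono : ∀ a b : ℕ, a ≤ b → S b ≤ S a := by
    intro a b hab
    apply Submodule.span_mono
    rintro z ⟨l, hl1, hl2, hz⟩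
    exact ⟨l, by omega, hl2, hz⟩
  -- bracket of anything with a basis element of index l ≥ 2 lands in S l
  have hA : ∀ l, 2 ≤ l → l ≤ n → ∀ X : g, ⁅X, x l⁆ ∈ S l ∧ ⁅X, y l⁆ ∈ S l := by
    intro l hl2 hln
    refine hind (fun X => ⁅X, x l⁆ ∈ S l ∧ ⁅X, y l⁆ ∈ S l) ?_ ?_ ?_ ?_ ?_
    · intro i hi1 hin
      rcases Nat.lt_or_ge i 2 with hi | hi
      · have hi' : i = 1 := by omega
        subst hi'
        rcases eq_or_lt_of_le hln with rfl | hlt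
        · rw [h3.1, h3.2.2.1]; exact ⟨zero_mem _, zero_mem _⟩
        · have hl' : l ≤ n - 1 := by omega
          rw [(h2 l hl2 hl').1, (h2 l hl2 hl').2.2.1]
          exact ⟨hSx l (l + 1) le_rfl (by omega), hSy l (l + 1) le_rfl (by omega)⟩
      · constructor
        · rw [(h4 i l hi hin hl2 hln).1]; exact zero_mem _
        · rw [(h4 i l hi hin hl2 hln).2.1]; exact zero_mem _
    · intro i hi1 hin
      rcases Nat.lt_or_ge i 2 with hi | hi
      · have hi' : i = 1 := by omega
        subst hi'
        rcases eq_or_lt_of_le hln with rfl | hlt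
        · constructor
          · rw [← lie_skew (y 1) (x l), h3.2.2.2, neg_zero]; exact zero_mem _
          · rw [h3.2.1]; exact zero_mem _
        · have hl' : l ≤ n - 1 := by omega
          constructor
          · rw [← lie_skew (y 1) (x l), (h2 l hl2 hl').2.2.2]
            exact neg_mem (hSy l (l + 1) le_rfl (by omega))
          · rw [(h2 l hl2 hl').2.1]
            exact hSx l (l + 1) le_rfl (by omega)
      · constructor
        · rw [← lie_skew (y i) (x l), (h4 l i hl2 hln hi hin).2.1, neg_zero]
          exact zero_mem _
        · rw [(h4 i l hi hin hl2 hln).2.2]; exact zero_mem _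
    · constructor <;> (rw [zero_lie]; exact zero_mem _)
    · intro a b ha hb
      constructor
      · rw [add_lie]; exact add_mem ha.1 hb.1
      · rw [add_lie]; exact add_mem ha.2 hb.2
    · intro r a ha
      constructor
      · rw [smul_lie]; exact Submodule.smul_mem _ _ ha.1
      · rw [smul_lie]; exact Submodule.smul_mem _ _ ha.2
  -- brackets with x 1, y 1 land in S 1
  have hA1 : ∀ X : g, ⁅X, x 1⁆ ∈ S 1 ∧ ⁅X, y 1⁆ ∈ S 1 := by
    refine hind (fun X => ⁅X, x 1⁆ ∈ S 1 ∧ ⁅X, y 1⁆ ∈ S 1) ?_ ?_ ?_ ?_ ?_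
    · intro i hi1 hin
      rcases Nat.lt_or_ge i 2 with hi | hi
      · have hi' : i = 1 := by omega
        subst hi'
        constructor
        · rw [lie_self]; exact zero_mem _
        · rw [h1]; exact hSy 1 2 le_rfl hn
      · rcases eq_or_lt_of_le hin with rfl | hlt
        · constructor
          · rw [← lie_skew (x i) (x 1), h3.1, neg_zero]; exact zero_mem _
          · rw [h3.2.2.2]; exact zero_mem _
        · have hi' : i ≤ n - 1 := by omega
          constructor
          · rw [← lie_skew (x i) (x 1), (h2 i hi hi').1]
            exact neg_mem (hSx 1 (i + 1) (by omega) (by omega))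
          · rw [(h2 i hi hi').2.2.2]
            exact hSy 1 (i + 1) (by omega) (by omega)
    · intro i hi1 hin
      rcases Nat.lt_or_ge i 2 with hi | hi
      · have hi' : i = 1 := by omega
        subst hi'
        constructor
        · rw [← lie_skew (y 1) (x 1), h1]
          exact neg_mem (hSy 1 2 le_rfl hn)
        · rw [lie_self]; exact zero_mem _
      · rcases eq_or_lt_of_le hin with rfl | hlt
        · constructor
          · rw [← lie_skew (y i) (x 1), h3.2.2.1, neg_zero]; exact zero_mem _
          · rw [← lie_skew (y i) (y 1), h3.2.1, neg_zero]; exact zero_mem _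
        · have hi' : i ≤ n - 1 := by omega
          constructor
          · rw [← lie_skew (y i) (x 1), (h2 i hi hi').2.2.1]
            exact neg_mem (hSy 1 (i + 1) (by omega) (by omega))
          · rw [← lie_skew (y i) (y 1), (h2 i hi hi').2.1]
            exact neg_mem (hSx 1 (i + 1) (by omega) (by omega))
    · constructor <;> (rw [zero_lie]; exact zero_mem _)
    · intro a b ha hb
      constructor
      · rw [add_lie]; exact add_mem ha.1 hb.1
      · rw [add_lie]; exact add_mem ha.2 hb.2
    · intro r a ha
      constructor
      · rw [smul_lie]; exact Submodule.smul_mem _ _ ha.1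
      · rw [smul_lie]; exact Submodule.smul_mem _ _ ha.2
  -- every bracket lands in S 1
  have hB : ∀ Y X : g, ⁅X, Y⁆ ∈ S 1 := by
    refine hind (fun Y => ∀ X : g, ⁅X, Y⁆ ∈ S 1) ?_ ?_ ?_ ?_ ?_
    · intro l hl1 hln X
      rcases Nat.lt_or_ge l 2 with hl | hl
      · have hl' : l = 1 := by omega
        subst hl'; exact (hA1 X).1
      · exact hSmono 1 l (by omega) ((hA l hl hln X).1)
    · intro l hl1 hln X
      rcases Nat.lt_or_ge l 2 with hl | hl
      · have hl' : l = 1 := by omega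
        subst hl'; exact (hA1 X).2
      · exact hSmono 1 l (by omega) ((hA l hl hln X).2)
    · intro X; rw [lie_zero]; exact zero_mem _
    · intro a b ha hb X; rw [lie_add]; exact add_mem (ha X) (hb X)
    · intro r a ha X; rw [lie_smul]; exact Submodule.smul_mem _ _ (ha X)
  -- descending step
  have hStep : ∀ k, 1 ≤ k → ∀ Z ∈ S k, ∀ X : g, ⁅X, Z⁆ ∈ S (k + 1) := by
    intro k hk Z hZ
    refine Submodule.span_induction (p := fun z _ => ∀ X : g, ⁅X, z⁆ ∈ S (k + 1))
      ?_ ?_ ?_ ?_ hZ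
    · rintro z ⟨l, hl1, hl2, (rfl | rfl)⟩ X
      · exact hSmono (k + 1) l hl1 ((hA l (by omega) hl2 X).1)
      · exact hSmono (k + 1) l hl1 ((hA l (by omega) hl2 X).2)
    · intro X; rw [lie_zero]; exact zero_mem _
    · intro a b _ _ ha hb X; rw [lie_add]; exact add_mem (ha X) (hb X)
    · intro r a _ ha X; rw [lie_smul]; exact Submodule.smul_mem _ _ (ha X)
  -- upper bound for the lower central series
  have hlcs_le : ∀ k, 1 ≤ k →
      ∀ z ∈ LieModule.lowerCentralSeries ℝ g g k, z ∈ S k := by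
    intro k hk
    induction k with
    | zero => omega
    | succ m ih =>
      intro z hz
      rw [LieModule.lowerCentralSeries_succ] at hz
      have hz' := (LieSubmodule.mem_toSubmodule _).mpr hz
      rw [LieSubmodule.lieIdeal_oper_eq_linear_span'] at hz'
      rcases Nat.eq_zero_or_pos m with rfl | hm
      · refine Submodule.span_le.2 ?_ hz'
        rintro w ⟨X, -, Z, -, rfl⟩
        exact hB Z X
      · refine Submodule.span_le.2 ?_ hz'
        rintro w ⟨X, -, Z, hZ, rfl⟩
        exact hStep m hm Z (ih hm Z hZ) X
  have hSn : S n = ⊥ := by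
    rw [eq_bot_iff, Submodule.span_le]
    rintro z ⟨l, hl1, hl2, -⟩
    omega
  have part4 : LieModule.lowerCentralSeries ℝ g g n = ⊥ := by
    rw [eq_bot_iff]
    intro z hz
    have hz' : z ∈ S n := hlcs_le n (by omega) z hz
    rw [hSn] at hz'
    simpa using hz'
  -- lower bound
  have hbr : ∀ (k : ℕ) (X Z : g), Z ∈ LieModule.lowerCentralSeries ℝ g g k →
      ⁅X, Z⁆ ∈ LieModule.lowerCentralSeries ℝ g g (k + 1) := by
    intro k X Z hZ
    rw [LieModule.lowerCentralSeries_succ]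
    exact LieSubmodule.lie_mem_lie (LieSubmodule.mem_top X) hZ
  have hy2mem : y 2 ∈ LieModule.lowerCentralSeries ℝ g g 1 := by
    have := hbr 0 (x 1) (y 1) (LieSubmodule.mem_top _)
    rw [h1] at this
    exact this
  have hxm : ∀ m, 3 ≤ m → m ≤ n → x m ∈ LieModule.lowerCentralSeries ℝ g g (m - 1) := by
    intro m hm3
    induction m, hm3 using Nat.le_induction with
    | base =>
      intro h3n
      have hb := (h2 2 le_rfl (by omega)).2.1
      have := hbr 1 (y 1) (y 2) hy2mem
      rw [hb] at this
      exact this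
    | succ m hm ih =>
      intro hsn
      have hxmem := ih (by omega)
      have hb := (h2 m (by omega) (by omega)).1
      have hmem := hbr (m - 1) (x 1) (x m) hxmem
      rw [hb] at hmem
      have hmm : m - 1 + 1 = m := by omega
      rw [hmm] at hmem
      exact hmem
  -- nonzero basis vectors
  have hne : ∀ l, 1 ≤ l → l ≤ n → x l ≠ 0 ∧ y l ≠ 0 := by
    intro l hl1 hln
    have hx := hli.ne_zero (⟨⟨l - 1, by omega⟩, false⟩ : Fin n × Bool)
    have hy := hli.ne_zero (⟨⟨l - 1, by omega⟩, true⟩ : Fin n × Bool)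
    have hll : l - 1 + 1 = l := by omega
    simp only [hll] at hx hy
    constructor
    · simpa using hx
    · simpa using hy
  have part3 : LieModule.lowerCentralSeries ℝ g g (n - 1) ≠ ⊥ := by
    intro hbot
    rcases eq_or_lt_of_le hn with h2n | h2n
    · have hn1 : n - 1 = 1 := by omega
      rw [hn1] at hbot
      rw [hbot] at hy2mem
      exact (hne 2 (by omega) hn).2 ((LieSubmodule.mem_bot _).1 hy2mem)
    · have hx := hxm n (by omega) le_rfl
      rw [hbot] at hx
      exact (hne n (by omega) le_rfl).1 ((LieSubmodule.mem_bot _).1 hx)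
  exact ⟨part1, part2, part3, part4⟩
end

section
/- The 6-dimensional real nilpotent Lie algebra g_{6,8} with basis e₁,...,e₆ and nonzero brackets [e₁,e₂] = e₃, [e₁,e₃] = e₄, [e₂,e₃] = e₅, [e₁,e₄] = e₆, [e₂,e₅] = e₆ admits the integrable complex structure J given by Je₁ = -e₂, Je₂ = e₁, Je₄ = -e₅, Je₅ = e₄, Je₃ = e₆, Je₆ = -e₃; moreover J is not abelian: there exist X,Y with [JX,JY] ≠ [X,Y]. -/
/-- The 6-dimensional real nilpotent Lie algebra `g₆,₈` with basis `e₁, …, e₆`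
(`e i` below, `i = 0, …, 5`) and nonzero brackets `[e₁,e₂] = e₃`, `[e₁,e₃] = e₄`,
`[e₂,e₃] = e₅`, `[e₁,e₄] = e₆`, `[e₂,e₅] = e₆` (all other basis brackets zero) admits
the integrable complex structure `J` with `Je₁ = -e₂`, `Je₂ = e₁`, `Je₄ = -e₅`,
`Je₅ = e₄`, `Je₃ = e₆`, `Je₆ = -e₃`; moreover `J` is not abelian. -/
theorem g68_admits_nonabelian_complex_structure
    {g : Type*} [LieRing g] [LieAlgebra ℝ g] (e : Fin 6 → g)
    (hli : LinearIndependent ℝ e)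
    (hspan : Submodule.span ℝ (Set.range e) = ⊤)
    (h12 : ⁅e 0, e 1⁆ = e 2) (h13 : ⁅e 0, e 2⁆ = e 3) (h23 : ⁅e 1, e 2⁆ = e 4)
    (h14 : ⁅e 0, e 3⁆ = e 5) (h25 : ⁅e 1, e 4⁆ = e 5)
    (z15 : ⁅e 0, e 4⁆ = 0) (z16 : ⁅e 0, e 5⁆ = 0) (z24 : ⁅e 1, e 3⁆ = 0)
    (z26 : ⁅e 1, e 5⁆ = 0) (z34 : ⁅e 2, e 3⁆ = 0) (z35 : ⁅e 2, e 4⁆ = 0)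
    (z36 : ⁅e 2, e 5⁆ = 0) (z45 : ⁅e 3, e 4⁆ = 0) (z46 : ⁅e 3, e 5⁆ = 0)
    (z56 : ⁅e 4, e 5⁆ = 0)
    (J : g →ₗ[ℝ] g)
    (hJ1 : J (e 0) = -e 1) (hJ2 : J (e 1) = e 0)
    (hJ4 : J (e 3) = -e 4) (hJ5 : J (e 4) = e 3)
    (hJ3 : J (e 2) = e 5) (hJ6 : J (e 5) = -e 2) :
    (∀ X : g, J (J X) = -X) ∧
    (∀ X Y : g, ⁅J X, J Y⁆ = ⁅X, Y⁆ + J ⁅J X, Y⁆ + J ⁅X, J Y⁆) ∧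
    (∃ X Y : g, ⁅J X, J Y⁆ ≠ ⁅X, Y⁆) := by
  -- reversed brackets
  have h21 : ⁅e 1, e 0⁆ = -e 2 := by rw [← lie_skew, h12]
  have h31 : ⁅e 2, e 0⁆ = -e 3 := by rw [← lie_skew, h13]
  have h32 : ⁅e 2, e 1⁆ = -e 4 := by rw [← lie_skew, h23]
  have h41 : ⁅e 3, e 0⁆ = -e 5 := by rw [← lie_skew, h14]
  have h52 : ⁅e 4, e 1⁆ = -e 5 := by rw [← lie_skew, h25]
  have z51 : ⁅e 4, e 0⁆ = 0 := by rw [← lie_skew, z15, neg_zero]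
  have z61 : ⁅e 5, e 0⁆ = 0 := by rw [← lie_skew, z16, neg_zero]
  have z42 : ⁅e 3, e 1⁆ = 0 := by rw [← lie_skew, z24, neg_zero]
  have z62 : ⁅e 5, e 1⁆ = 0 := by rw [← lie_skew, z26, neg_zero]
  have z43 : ⁅e 3, e 2⁆ = 0 := by rw [← lie_skew, z34, neg_zero]
  have z53 : ⁅e 4, e 2⁆ = 0 := by rw [← lie_skew, z35, neg_zero]
  have z63 : ⁅e 5, e 2⁆ = 0 := by rw [← lie_skew, z36, neg_zero]
  have z54 : ⁅e 4, e 3⁆ = 0 := by rw [← lie_skew, z45, neg_zero]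
  have z64 : ⁅e 5, e 3⁆ = 0 := by rw [← lie_skew, z46, neg_zero]
  have z65 : ⁅e 5, e 4⁆ = 0 := by rw [← lie_skew, z56, neg_zero]
  have memX : ∀ X : g, X ∈ Submodule.span ℝ (Set.range e) := fun X =>
    hspan ▸ Submodule.mem_top
  refine ⟨?_, ?_, ?_⟩
  · -- J² = -id
    have keyJ : ∀ i : Fin 6, J (J (e i)) = -(e i) := by
      intro i
      fin_cases i <;>
        simp [hJ1, hJ2, hJ3, hJ4, hJ5, hJ6, map_neg]
    intro X
    induction memX X using Submodule.span_induction with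
    | mem x hx => obtain ⟨i, rfl⟩ := hx; exact keyJ i
    | zero => simp
    | add x y hx hy hx' hy' => simp only [map_add, hx', hy']; abel
    | smul c x hx hx' => simp only [map_smul, hx', smul_neg]
  · -- integrability
    have key : ∀ i j : Fin 6,
        ⁅J (e i), J (e j)⁆ = ⁅e i, e j⁆ + J ⁅J (e i), e j⁆ + J ⁅e i, J (e j)⁆ := by
      intro i j
      fin_cases i <;> fin_cases j <;>
        simp [hJ1, hJ2, hJ3, hJ4, hJ5, hJ6,
          h12, h13, h23, h14, h25, z15, z16, z24, z26, z34, z35, z36, z45, z46, z56,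
          h21, h31, h32, h41, h52, z51, z61, z42, z62, z43, z53, z63, z54, z64, z65,
          map_neg, map_zero, lie_neg, neg_lie, lie_self, lie_zero, zero_lie]
    have keyY : ∀ (i : Fin 6) (Y : g),
        ⁅J (e i), J Y⁆ = ⁅e i, Y⁆ + J ⁅J (e i), Y⁆ + J ⁅e i, J Y⁆ := by
      intro i Y
      induction memX Y using Submodule.span_induction with
      | mem y hy => obtain ⟨j, rfl⟩ := hy; exact key i j
      | zero => simp
      | add y z hy hz hy' hz' =>
          simp only [map_add, lie_add, hy', hz']; abel
      | smul c y hy hy' =>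
          simp only [map_smul, lie_smul, hy', smul_add]
    intro X Y
    induction memX X using Submodule.span_induction with
    | mem x hx => obtain ⟨i, rfl⟩ := hx; exact keyY i Y
    | zero => simp
    | add x z hx hz hx' hz' =>
        simp only [map_add, add_lie, lie_add, hx', hz']; abel
    | smul c x hx hx' =>
        simp only [map_smul, smul_lie, lie_smul, hx', smul_add]
  · refine ⟨e 0, e 2, ?_⟩
    simp only [hJ1, hJ3, neg_lie, z26, neg_zero, h13]
    exact (hli.ne_zero 3).symm
end

section
/- For each n ≥ 2, the graded Lie algebra D(n) = ⊕_{l=1}^n D_l, where D_l has dimension 2 for odd l and dimension 1 for even l, with basis v_{2k-1}, u_{2k-1} in odd degrees and w_{2k} in even degrees, and brackets [v_i, w_j] = u_{i+j}, [w_j, u_l] = v_{j+l}, [u_l, v_i] = w_{l+i} whenever the degree sum is ≤ n (and zero otherwise), is a nilpotent Lie algebra whose descending central series satisfies D(n)^m = ⊕_{l=m}^n D_l for 2 ≤ m ≤ n; in particular its nil-index equals n. -/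
/-!
The bracket of basis vectors of degrees `a` and `b` is `±` a basis vector of degree `a + b`,
or zero, so `[D(n), span of degrees ≥ m] ⊆ span of degrees ≥ m + 1`. Conversely every basis
vector of degree `l ≥ 2` is the bracket of `v₁` or `u₁` (up to sign) with a basis vector of
degree `l - 1`. By induction `D(n)^{k+1}` is the span of the basis vectors of degree `≥ k + 1`:
it still contains the top-degree vector for `k = n - 1` and is zero for `k = n`.
-/

theorem lie_mem_of_mem_span {R L M : Type*} [CommRing R] [LieRing L] [LieAlgebra R L]
    [AddCommGroup M] [Module R M] [LieRingModule L M] [LieModule R L M]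
    {s : Set L} {t : Set M} {p : Submodule R M} (h : ∀ x ∈ s, ∀ y ∈ t, ⁅x, y⁆ ∈ p)
    {x : L} {y : M} (hx : x ∈ Submodule.span R s) (hy : y ∈ Submodule.span R t) :
    ⁅x, y⁆ ∈ p :=
  Submodule.span_induction₂ (p := fun x y _ _ => ⁅x, y⁆ ∈ p)
    (fun x y hx hy => h x hx y hy) (fun _ _ => by simp) (fun _ _ => by simp)
    (fun _ _ _ _ _ _ h₁ h₂ => by rw [add_lie]; exact add_mem h₁ h₂)
    (fun _ _ _ _ _ _ h₁ h₂ => by rw [lie_add]; exact add_mem h₁ h₂)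
    (fun _ _ _ _ _ h₁ => by rw [smul_lie]; exact p.smul_mem _ h₁)
    (fun _ _ _ _ _ h₁ => by rw [lie_smul]; exact p.smul_mem _ h₁) hx hy

namespace Dn

variable {g : Type*} {v u w : ℕ → g} {n : ℕ}

def IsBasisVec (v u w : ℕ → g) (l : ℕ) (z : g) : Prop :=
  (Odd l ∧ (z = v l ∨ z = u l)) ∨ (Even l ∧ z = w l)

def basisFrom (v u w : ℕ → g) (n m : ℕ) : Set g :=
  {z | ∃ l, m ≤ l ∧ l ≤ n ∧ IsBasisVec v u w l z}

def Index (n : ℕ) : Type :=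
  {p : ℕ × Fin 3 // 1 ≤ p.1 ∧ p.1 ≤ n ∧ ((p.2 ≠ 2 ∧ Odd p.1) ∨ (p.2 = 2 ∧ Even p.1))}

def family (v u w : ℕ → g) (n : ℕ) (q : Index n) : g :=
  if q.val.2 = 0 then v q.val.1 else if q.val.2 = 1 then u q.val.1 else w q.val.1

variable (v u w n) in
theorem basisFrom_antitone : Antitone (basisFrom v u w n) :=
  fun _ _ h _ ⟨l, hl, hln, hz⟩ => ⟨l, h.trans hl, hln, hz⟩

theorem basisFrom_eq_empty_of_lt {m : ℕ} (h : n < m) : basisFrom v u w n m = ∅ :=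
  Set.eq_empty_of_forall_notMem fun _ ⟨_, hml, hln, _⟩ => by omega

theorem isBasisVec_family (q : Index n) : IsBasisVec v u w q.1.1 (family v u w n q) := by
  obtain ⟨⟨l, k⟩, -, -, hk⟩ := q
  fin_cases k
  · exact Or.inl ⟨(hk.resolve_right (by simp)).2, Or.inl rfl⟩
  · exact Or.inl ⟨(hk.resolve_right (by simp)).2, Or.inr rfl⟩
  · exact Or.inr ⟨(hk.resolve_left (by simp)).2, rfl⟩

theorem range_family : Set.range (family v u w n) = basisFrom v u w n 1 := by
  ext z
  constructor
  · rintro ⟨q, rfl⟩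
    exact ⟨q.1.1, q.2.1, q.2.2.1, isBasisVec_family q⟩
  · rintro ⟨l, h1, hln, ⟨ho, rfl | rfl⟩ | ⟨he, rfl⟩⟩
    · exact ⟨⟨(l, 0), h1, hln, Or.inl ⟨(by decide : (0 : Fin 3) ≠ 2), ho⟩⟩, rfl⟩
    · exact ⟨⟨(l, 1), h1, hln, Or.inl ⟨(by decide : (1 : Fin 3) ≠ 2), ho⟩⟩, rfl⟩
    · exact ⟨⟨(l, 2), h1, hln, Or.inr ⟨rfl, he⟩⟩, rfl⟩

section Module

variable {R : Type*} [CommRing R] [AddCommGroup g] [Module R g]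

theorem span_basisFrom_one_eq_top (hspan : Submodule.span R (Set.range (family v u w n)) = ⊤) :
    Submodule.span R (basisFrom v u w n 1) = ⊤ := by
  rwa [← range_family]

theorem span_basisFrom_self_ne_bot [Nontrivial R] (hli : LinearIndependent R (family v u w n))
    (hn : 1 ≤ n) : Submodule.span R (basisFrom v u w n n) ≠ ⊥ := by
  obtain ⟨q, hq⟩ : ∃ q : Index n, IsBasisVec v u w n (family v u w n q) := by
    rcases Nat.even_or_odd n with he | ho
    · exact ⟨⟨(n, 2), hn, le_rfl, Or.inr ⟨rfl, he⟩⟩, Or.inr ⟨he, rfl⟩⟩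
    · exact ⟨⟨(n, 0), hn, le_rfl, Or.inl ⟨(by decide : (0 : Fin 3) ≠ 2), ho⟩⟩,
        Or.inl ⟨ho, Or.inl rfl⟩⟩
  rw [Submodule.ne_bot_iff]
  exact ⟨family v u w n q, Submodule.subset_span ⟨n, le_rfl, le_rfl, hq⟩, hli.ne_zero q⟩

theorem ite_mem_span_basisFrom {l m : ℕ} {z : g} (hz : IsBasisVec v u w l z) (hml : m ≤ l) :
    (if l ≤ n then z else 0) ∈ Submodule.span R (basisFrom v u w n m) := by
  split_ifs with hln
  · exact Submodule.subset_span ⟨l, hml, hln, hz⟩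
  · exact zero_mem _

end Module

structure IsBracket [LieRing g] (n : ℕ) (v u w : ℕ → g) : Prop where
  vw : ∀ i j : ℕ, Odd i → Even j → 1 ≤ i → i ≤ n → 1 ≤ j → j ≤ n →
    ⁅v i, w j⁆ = if i + j ≤ n then u (i + j) else 0
  wu : ∀ j l : ℕ, Even j → Odd l → 1 ≤ j → j ≤ n → 1 ≤ l → l ≤ n →
    ⁅w j, u l⁆ = if j + l ≤ n then v (j + l) else 0
  uv : ∀ l i : ℕ, Odd l → Odd i → 1 ≤ l → l ≤ n → 1 ≤ i → i ≤ n →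
    ⁅u l, v i⁆ = if l + i ≤ n then w (l + i) else 0
  vv_uu : ∀ i i' : ℕ, Odd i → Odd i' → 1 ≤ i → i ≤ n → 1 ≤ i' → i' ≤ n →
    ⁅v i, v i'⁆ = 0 ∧ ⁅u i, u i'⁆ = 0
  ww : ∀ j j' : ℕ, Even j → Even j' → 1 ≤ j → j ≤ n → 1 ≤ j' → j' ≤ n → ⁅w j, w j'⁆ = 0

namespace IsBracket

variable {R : Type*} [CommRing R] [LieRing g] [LieAlgebra R g]

theorem lie_mem_span (hD : IsBracket n v u w) {a b : ℕ} {x y : g}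
    (ha₁ : 1 ≤ a) (ha₂ : a ≤ n) (hb₁ : 1 ≤ b) (hb₂ : b ≤ n)
    (hx : IsBasisVec v u w a x) (hy : IsBasisVec v u w b y) :
    ⁅x, y⁆ ∈ Submodule.span R (basisFrom v u w n (a + b)) := by
  have hba : a + b ≤ b + a := (add_comm a b).le
  obtain ⟨ha, rfl | rfl⟩ | ⟨ha, rfl⟩ := hx <;> obtain ⟨hb, rfl | rfl⟩ | ⟨hb, rfl⟩ := hy
  · simp [(hD.vv_uu a b ha hb ha₁ ha₂ hb₁ hb₂).1]
  · rw [← lie_skew, hD.uv b a hb ha hb₁ hb₂ ha₁ ha₂]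
    exact neg_mem (ite_mem_span_basisFrom (Or.inr ⟨hb.add_odd ha, rfl⟩) hba)
  · rw [hD.vw a b ha hb ha₁ ha₂ hb₁ hb₂]
    exact ite_mem_span_basisFrom (Or.inl ⟨ha.add_even hb, Or.inr rfl⟩) le_rfl
  · rw [hD.uv a b ha hb ha₁ ha₂ hb₁ hb₂]
    exact ite_mem_span_basisFrom (Or.inr ⟨ha.add_odd hb, rfl⟩) le_rfl
  · simp [(hD.vv_uu a b ha hb ha₁ ha₂ hb₁ hb₂).2]
  · rw [← lie_skew, hD.wu b a hb ha hb₁ hb₂ ha₁ ha₂]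
    exact neg_mem (ite_mem_span_basisFrom (Or.inl ⟨hb.add_odd ha, Or.inl rfl⟩) hba)
  · rw [← lie_skew, hD.vw b a hb ha hb₁ hb₂ ha₁ ha₂]
    exact neg_mem (ite_mem_span_basisFrom (Or.inl ⟨hb.add_even ha, Or.inr rfl⟩) hba)
  · rw [hD.wu a b ha hb ha₁ ha₂ hb₁ hb₂]
    exact ite_mem_span_basisFrom (Or.inl ⟨ha.add_odd hb, Or.inl rfl⟩) le_rfl
  · simp [hD.ww a b ha hb ha₁ ha₂ hb₁ hb₂]

theorem exists_lie_eq (hD : IsBracket n v u w) {l : ℕ} {z : g} (hz : IsBasisVec v u w l z)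
    (hl₂ : 2 ≤ l) (hln : l ≤ n) : ∃ x y : g, IsBasisVec v u w (l - 1) y ∧ ⁅x, y⁆ = z := by
  obtain ⟨hl, rfl | rfl⟩ | ⟨hl, rfl⟩ := hz
  · have he : Even (l - 1) := Nat.Odd.sub_odd hl odd_one
    refine ⟨-u 1, w (l - 1), Or.inr ⟨he, rfl⟩, ?_⟩
    rw [neg_lie, lie_skew, hD.wu (l - 1) 1 he odd_one (by omega) (by omega) le_rfl (by omega),
      if_pos (by omega), Nat.sub_add_cancel (by omega)]
  · have he : Even (l - 1) := Nat.Odd.sub_odd hl odd_one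
    refine ⟨v 1, w (l - 1), Or.inr ⟨he, rfl⟩, ?_⟩
    rw [hD.vw 1 (l - 1) odd_one he le_rfl (by omega) (by omega) (by omega),
      if_pos (by omega), Nat.add_sub_cancel' (by omega)]
  · have ho : Odd (l - 1) := Nat.Even.sub_odd (by omega) hl odd_one
    refine ⟨u 1, v (l - 1), Or.inl ⟨ho, Or.inl rfl⟩, ?_⟩
    rw [hD.uv 1 (l - 1) odd_one ho le_rfl (by omega) (by omega) (by omega),
      if_pos (by omega), Nat.add_sub_cancel' (by omega)]

theorem toSubmodule_lie_top_eq (hD : IsBracket n v u w)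
    (hspan : Submodule.span R (basisFrom v u w n 1) = ⊤) {m : ℕ} (hm : 1 ≤ m)
    {N : LieSubmodule R g g} (hN : N.toSubmodule = Submodule.span R (basisFrom v u w n m)) :
    (⁅(⊤ : LieIdeal R g), N⁆ : LieSubmodule R g g).toSubmodule =
      Submodule.span R (basisFrom v u w n (m + 1)) := by
  apply le_antisymm
  · rw [LieSubmodule.lieIdeal_oper_eq_linear_span, Submodule.span_le]
    rintro _ ⟨⟨x, -⟩, ⟨y, hy⟩, rfl⟩
    rw [← LieSubmodule.mem_toSubmodule, hN] at hy
    have hx : x ∈ Submodule.span R (basisFrom v u w n 1) := hspan ▸ Submodule.mem_top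
    refine lie_mem_of_mem_span ?_ hx hy
    rintro x ⟨a, ha₁, ha₂, hx⟩ y ⟨b, hb, hb₂, hy⟩
    exact Submodule.span_mono (basisFrom_antitone v u w n (by omega))
      (hD.lie_mem_span ha₁ ha₂ (by omega) hb₂ hx hy)
  · rw [Submodule.span_le]
    rintro z ⟨l, hl, hln, hz⟩
    obtain ⟨x, y, hy, rfl⟩ := hD.exists_lie_eq hz (by omega) hln
    refine LieSubmodule.lie_mem_lie (LieSubmodule.mem_top x) ?_
    rw [← LieSubmodule.mem_toSubmodule, hN]
    exact Submodule.subset_span ⟨l - 1, by omega, by omega, hy⟩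

theorem toSubmodule_lowerCentralSeries_eq (hD : IsBracket n v u w)
    (hspan : Submodule.span R (basisFrom v u w n 1) = ⊤) (k : ℕ) :
    (LieModule.lowerCentralSeries R g g k).toSubmodule =
      Submodule.span R (basisFrom v u w n (k + 1)) := by
  induction k with
  | zero => exact hspan.symm
  | succ k ih =>
    rw [LieModule.lowerCentralSeries_succ]
    exact hD.toSubmodule_lie_top_eq hspan k.succ_pos ih

end IsBracket

end Dn

open Dn in
/-- For `n ≥ 2`, the graded Lie algebra `D(n) = ⊕_{l=1}^n D_l`, where `D_l` is spanned
by `v_l, u_l` for odd `l` and by `w_l` for even `l`, with brackets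
`[v_i, w_j] = u_{i+j}`, `[w_j, u_l] = v_{j+l}`, `[u_l, v_i] = w_{l+i}` when the degree
sum is `≤ n` (and zero otherwise; `i, l` odd, `j` even; all other basis brackets zero),
is nilpotent with descending central series `D(n)^m = ⊕_{l=m}^n D_l` for `2 ≤ m ≤ n`;
in particular its nil-index equals `n`. -/
theorem D_n_lower_central_series
    {g : Type*} [LieRing g] [LieAlgebra ℝ g] (n : ℕ) (hn : 2 ≤ n)
    (v u w : ℕ → g)
    (hli : LinearIndependent ℝ
      (fun q : {p : ℕ × Fin 3 // 1 ≤ p.1 ∧ p.1 ≤ n ∧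
          ((p.2 ≠ 2 ∧ Odd p.1) ∨ (p.2 = 2 ∧ Even p.1))} =>
        if q.val.2 = 0 then v q.val.1 else if q.val.2 = 1 then u q.val.1 else w q.val.1))
    (hspan : Submodule.span ℝ
      (Set.range (fun q : {p : ℕ × Fin 3 // 1 ≤ p.1 ∧ p.1 ≤ n ∧
          ((p.2 ≠ 2 ∧ Odd p.1) ∨ (p.2 = 2 ∧ Even p.1))} =>
        if q.val.2 = 0 then v q.val.1 else if q.val.2 = 1 then u q.val.1
          else w q.val.1)) = ⊤)
    (hvw : ∀ i j : ℕ, Odd i → Even j → 1 ≤ i → i ≤ n → 1 ≤ j → j ≤ n →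
      ⁅v i, w j⁆ = if i + j ≤ n then u (i + j) else 0)
    (hwu : ∀ j l : ℕ, Even j → Odd l → 1 ≤ j → j ≤ n → 1 ≤ l → l ≤ n →
      ⁅w j, u l⁆ = if j + l ≤ n then v (j + l) else 0)
    (huv : ∀ l i : ℕ, Odd l → Odd i → 1 ≤ l → l ≤ n → 1 ≤ i → i ≤ n →
      ⁅u l, v i⁆ = if l + i ≤ n then w (l + i) else 0)
    (hvvuu : ∀ i i' : ℕ, Odd i → Odd i' → 1 ≤ i → i ≤ n → 1 ≤ i' → i' ≤ n →
      ⁅v i, v i'⁆ = 0 ∧ ⁅u i, u i'⁆ = 0)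
    (hww : ∀ j j' : ℕ, Even j → Even j' → 1 ≤ j → j ≤ n → 1 ≤ j' → j' ≤ n →
      ⁅w j, w j'⁆ = 0) :
    (∀ m : ℕ, 2 ≤ m → m ≤ n →
      (LieModule.lowerCentralSeries ℝ g g (m - 1)).toSubmodule =
        Submodule.span ℝ {z : g | ∃ l : ℕ, m ≤ l ∧ l ≤ n ∧
          ((Odd l ∧ (z = v l ∨ z = u l)) ∨ (Even l ∧ z = w l))}) ∧
    LieModule.lowerCentralSeries ℝ g g (n - 1) ≠ ⊥ ∧
    LieModule.lowerCentralSeries ℝ g g n = ⊥ := by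
  have hD : IsBracket n v u w := ⟨hvw, hwu, huv, hvvuu, hww⟩
  have hlcs := hD.toSubmodule_lowerCentralSeries_eq (span_basisFrom_one_eq_top hspan)
  refine ⟨fun m hm _ => ?_, fun hbot => ?_, ?_⟩
  · rw [hlcs, Nat.sub_add_cancel (by omega)]
    rfl
  · have htop := hlcs (n - 1)
    rw [hbot, LieSubmodule.bot_toSubmodule, Nat.sub_add_cancel (by omega)] at htop
    exact span_basisFrom_self_ne_bot hli (by omega) htop.symm
  · rw [← LieSubmodule.toSubmodule_eq_bot, hlcs, basisFrom_eq_empty_of_lt n.lt_succ_self,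
      Submodule.span_empty]
end
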